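/- arXiv:1107.0203 — 8 statements merged into one kernel-verified Lean document; each statement's English description precedes it below -/
import Mathlib

section
/- For sets D ⊂ X, E ⊂ Y and points x ∈ D, y ∈ E, one has T_U(D,x) × T_B(E,y) ⊂ T_B(D × E, (x,y)) ⊂ T_B(D,x) × T_B(E,y), where T_B and T_U denote the Bouligand and Ursescu tangent cones respectively. -/
open Filter Topology Pointwise

section Defs

variable {X Y : Type*} [NormedAddCommGroup X] [NormedSpace ℝ X]
  [NormedAddCommGroup Y] [NormedSpace ℝ Y]

/-- A sequence of positive reals tending to zero. -/
def PosToZero (t : ℕ → ℝ) : Prop := (∀ n, 0 < t n) ∧ Tendsto t atTop (𝓝 0)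

/-- First order Bouligand tangent cone. -/
def TB (D : Set X) (x : X) : Set X :=
  {u | ∃ t : ℕ → ℝ, PosToZero t ∧ ∃ w : ℕ → X, Tendsto w atTop (𝓝 u) ∧
    ∀ n, x + t n • w n ∈ D}

/-- First order Ursescu tangent cone. -/
def TU (D : Set X) (x : X) : Set X :=
  {u | ∀ t : ℕ → ℝ, PosToZero t → ∃ w : ℕ → X, Tendsto w atTop (𝓝 u) ∧
    ∀ n, x + t n • w n ∈ D}

/-- Second order Bouligand tangent set. -/
def TB2 (D : Set X) (x x₁ : X) : Set X :=
  {u | ∃ t : ℕ → ℝ, PosToZero t ∧ ∃ w : ℕ → X, Tendsto w atTop (𝓝 u) ∧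
    ∀ n, x + t n • x₁ + (t n) ^ 2 • w n ∈ D}

/-- Second order Ursescu tangent set. -/
def TU2 (D : Set X) (x x₁ : X) : Set X :=
  {u | ∀ t : ℕ → ℝ, PosToZero t → ∃ w : ℕ → X, Tendsto w atTop (𝓝 u) ∧
    ∃ n₀ : ℕ, ∀ n ≥ n₀, x + t n • x₁ + (t n) ^ 2 • w n ∈ D}

/-- Graph of a set-valued map. -/
def SVGraph (F : X → Set Y) : Set (X × Y) := {p | p.2 ∈ F p.1}

/-- First order Bouligand derivative. -/
def DB (F : X → Set Y) (x : X) (y : Y) (u : X) : Set Y :=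
  {v | (u, v) ∈ TB (SVGraph F) (x, y)}

/-- First order Ursescu derivative. -/
def DU (F : X → Set Y) (x : X) (y : Y) (u : X) : Set Y :=
  {v | (u, v) ∈ TU (SVGraph F) (x, y)}

/-- Dini lower derivative. -/
def DD (F : X → Set Y) (x : X) (y : Y) (u : X) : Set Y :=
  {v | ∀ t : ℕ → ℝ, PosToZero t → ∀ w : ℕ → X, Tendsto w atTop (𝓝 u) →
    ∃ v' : ℕ → Y, Tendsto v' atTop (𝓝 v) ∧
      ∃ n₀ : ℕ, ∀ n ≥ n₀, y + t n • v' n ∈ F (x + t n • w n)}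

/-- Aubin property of a set-valued map around a point of its graph. -/
def AubinProperty (F : X → Set Y) (x : X) (y : Y) : Prop :=
  ∃ L > (0:ℝ), ∃ r > (0:ℝ), ∀ x' x'' : X, ‖x' - x‖ ≤ r → ‖x'' - x‖ ≤ r →
    ∀ y' ∈ F x', ‖y' - y‖ ≤ r → ∃ y'' ∈ F x'', ‖y' - y''‖ ≤ L * ‖x' - x''‖

end Defs

theorem tb_prod {X Y : Type*} [NormedAddCommGroup X] [NormedSpace ℝ X]
    [NormedAddCommGroup Y] [NormedSpace ℝ Y]
    (D : Set X) (E : Set Y) (x : X) (y : Y) (hx : x ∈ D) (hy : y ∈ E) :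
    TU D x ×ˢ TB E y ⊆ TB (D ×ˢ E) (x, y) ∧
      TB (D ×ˢ E) (x, y) ⊆ TB D x ×ˢ TB E y := by
  constructor
  · rintro ⟨u, v⟩ ⟨hu, hv⟩
    obtain ⟨t, ht, wv, hwv, hmem⟩ := hv
    obtain ⟨wu, hwu, hmemu⟩ := hu t ht
    exact ⟨t, ht, fun n => (wu n, wv n), hwu.prodMk_nhds hwv,
      fun n => ⟨hmemu n, hmem n⟩⟩
  · rintro ⟨u, v⟩ ⟨t, ht, w, hw, hmem⟩
    constructor
    · exact ⟨t, ht, fun n => (w n).1, (continuous_fst.tendsto _).comp hw,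
        fun n => (hmem n).1⟩
    · exact ⟨t, ht, fun n => (w n).2, (continuous_snd.tendsto _).comp hw,
        fun n => (hmem n).2⟩
end

section
/- For sets D ⊂ X, E ⊂ Y and points x ∈ D, y ∈ E, the Ursescu tangent cone of the product equals the product of the Ursescu tangent cones: T_U(D × E, (x,y)) = T_U(D,x) × T_U(E,y). -/
open Filter Topology Pointwise

theorem tu_prod {X Y : Type*} [NormedAddCommGroup X] [NormedSpace ℝ X]
    [NormedAddCommGroup Y] [NormedSpace ℝ Y]
    (D : Set X) (E : Set Y) (x : X) (y : Y) (hx : x ∈ D) (hy : y ∈ E) :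
    TU (D ×ˢ E) (x, y) = TU D x ×ˢ TU E y := by
  ext ⟨u, v⟩
  constructor
  · intro h
    constructor
    · intro t ht
      obtain ⟨w, hw, hmem⟩ := h t ht
      refine ⟨fun n => (w n).1, ?_, fun n => (hmem n).1⟩
      exact (continuous_fst.tendsto _).comp hw
    · intro t ht
      obtain ⟨w, hw, hmem⟩ := h t ht
      refine ⟨fun n => (w n).2, ?_, fun n => (hmem n).2⟩
      exact (continuous_snd.tendsto _).comp hw
  · rintro ⟨h1, h2⟩ t ht
    obtain ⟨w1, hw1, hm1⟩ := h1 t ht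
    obtain ⟨w2, hw2, hm2⟩ := h2 t ht
    exact ⟨fun n => (w1 n, w2 n), hw1.prodMk_nhds hw2,
      fun n => ⟨hm1 n, hm2 n⟩⟩
end

section
/- For second-order tangent sets of products: T_U²(D,x,x₁) × T_B²(E,y,y₁) ⊂ T_B²(D × E, (x,y), (x₁,y₁)) ⊂ T_B²(D,x,x₁) × T_B²(E,y,y₁). -/
open Filter Topology Pointwise

theorem tb2_prod {X Y : Type*} [NormedAddCommGroup X] [NormedSpace ℝ X]
    [NormedAddCommGroup Y] [NormedSpace ℝ Y]
    (D : Set X) (E : Set Y) (x : X) (y : Y) (hx : x ∈ D) (hy : y ∈ E)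
    (x₁ : X) (y₁ : Y) :
    TU2 D x x₁ ×ˢ TB2 E y y₁ ⊆ TB2 (D ×ˢ E) (x, y) (x₁, y₁) ∧
      TB2 (D ×ˢ E) (x, y) (x₁, y₁) ⊆ TB2 D x x₁ ×ˢ TB2 E y y₁ := by
  constructor
  · rintro ⟨u, v⟩ ⟨hu, hv⟩
    obtain ⟨t, ht, s, hs, hsE⟩ := hv
    obtain ⟨w, hw, n₀, hn⟩ := hu t ht
    refine ⟨fun n => t (n + n₀), ⟨fun n => ht.1 _,
      ht.2.comp (tendsto_add_atTop_nat n₀)⟩,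
      fun n => (w (n + n₀), s (n + n₀)),
      ((hw.comp (tendsto_add_atTop_nat n₀)).prodMk_nhds
        (hs.comp (tendsto_add_atTop_nat n₀))), fun n => ?_⟩
    exact Set.mk_mem_prod (hn (n + n₀) (Nat.le_add_left _ _)) (hsE (n + n₀))
  · rintro ⟨u, v⟩ ⟨t, ht, w, hw, hD⟩
    refine ⟨⟨t, ht, fun n => (w n).1,
      (continuous_fst.tendsto _).comp hw, fun n => (hD n).1⟩,
      t, ht, fun n => (w n).2,
      (continuous_snd.tendsto _).comp hw, fun n => (hD n).2⟩
end

section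
/- If A : X → Y is a bounded linear operator, M ⊂ X, x̄ ∈ M and x₁ ∈ X, then cl(A(T_B²(M, x̄, x₁))) ⊂ T_B²(A(M), A(x̄), A(x₁)). -/
open Filter Topology Pointwise

lemma tb2_isSeqClosed {Y : Type*} [NormedAddCommGroup Y] [NormedSpace ℝ Y]
    (D : Set Y) (x x₁ : Y) : IsSeqClosed (TB2 D x x₁) := by
  intro y u hy hu
  -- for each k choose a data point with small t and w close to y k
  have key : ∀ k : ℕ, ∃ s : ℝ, ∃ v : Y, 0 < s ∧ s < 1 / (k + 1) ∧
      ‖v - y k‖ < 1 / (k + 1) ∧ x + s • x₁ + s ^ 2 • v ∈ D := by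
    intro k
    obtain ⟨t, ⟨ht0, htlim⟩, w, hwlim, hmem⟩ := hy k
    have hpos : (0:ℝ) < 1 / (k + 1) := by positivity
    have h1 : ∀ᶠ n in atTop, t n < 1 / (k + 1) := htlim.eventually_lt_const hpos
    have h2 : Tendsto (fun n => ‖w n - y k‖) atTop (𝓝 0) :=
      tendsto_iff_norm_sub_tendsto_zero.mp hwlim
    have h3 : ∀ᶠ n in atTop, ‖w n - y k‖ < 1 / (k + 1) := h2.eventually_lt_const hpos
    obtain ⟨n, hn1, hn2⟩ := (h1.and h3).exists
    exact ⟨t n, w n, ht0 n, hn1, hn2, hmem n⟩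
  choose s v hs0 hslt hvclose hvmem using key
  have hone : Tendsto (fun k : ℕ => 1 / ((k : ℝ) + 1)) atTop (𝓝 0) :=
    tendsto_one_div_add_atTop_nhds_zero_nat
  refine ⟨s, ⟨hs0, ?_⟩, v, ?_, hvmem⟩
  · exact squeeze_zero (fun k => (hs0 k).le) (fun k => (hslt k).le) hone
  · rw [tendsto_iff_norm_sub_tendsto_zero]
    have hyb : Tendsto (fun k => ‖y k - u‖) atTop (𝓝 0) :=
      tendsto_iff_norm_sub_tendsto_zero.mp hu
    have hb : Tendsto (fun k : ℕ => 1 / ((k : ℝ) + 1) + ‖y k - u‖) atTop (𝓝 0) := by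
      simpa using hone.add hyb
    refine squeeze_zero (fun k => norm_nonneg _) (fun k => ?_) hb
    calc ‖v k - u‖ ≤ ‖v k - y k‖ + ‖y k - u‖ := norm_sub_le_norm_sub_add_norm_sub _ _ _
      _ ≤ 1 / (k + 1) + ‖y k - u‖ := by
          have := (hvclose k).le; linarith

theorem tb2_image_linear {X Y : Type*} [NormedAddCommGroup X] [NormedSpace ℝ X]
    [NormedAddCommGroup Y] [NormedSpace ℝ Y]
    (A : X →L[ℝ] Y) (M : Set X) (xb x₁ : X) (hxb : xb ∈ M) :
    closure (A '' TB2 M xb x₁) ⊆ TB2 (A '' M) (A xb) (A x₁) := by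
  have hclosed : IsClosed (TB2 (A '' M) (A xb) (A x₁)) :=
    (tb2_isSeqClosed _ _ _).isClosed
  rw [hclosed.closure_subset_iff]
  rintro _ ⟨z, ⟨t, ht, w, hwlim, hmem⟩, rfl⟩
  refine ⟨t, ht, fun n => A (w n), (A.continuous.tendsto z).comp hwlim, fun n => ?_⟩
  have : A xb + t n • A x₁ + t n ^ 2 • A (w n)
      = A (xb + t n • x₁ + t n ^ 2 • w n) := by
    simp [map_add, map_smul]
  rw [this]
  exact Set.mem_image_of_mem A (hmem n)
end

section
/- Let X, Y be Banach spaces, D ⊂ X, E ⊂ Y closed sets, f : X → Y continuously Fréchet differentiable, and x̄ ∈ D ∩ f⁻¹(E). Assume the map g : X × Y → Y, g(x,y) = f(x) − y, is metrically subregular at (x̄, f(x̄), 0) with respect to D × E, i.e., there exist s > 0, μ > 0 such that for every (x,y) ∈ [B(x̄,s) × B(f(x̄),s)] ∩ (D × E), d((x,y), g⁻¹(0) ∩ (D × E)) ≤ μ‖f(x) − y‖. Then T_B(D, x̄) ∩ ∇f(x̄)⁻¹(T_U(E, f(x̄))) ⊂ T_B(D ∩ f⁻¹(E), x̄). -/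
open Filter Topology Pointwise

/-!
Fix `u ∈ T_B(D, x̄)` along `tₙ ↓ 0`, `wₙ → u`, with `∇f(x̄) u ∈ T_U(E, f(x̄))`. The Ursescu
cone lets us pick `vₙ → ∇f(x̄) u` along the *same* `tₙ`, so `xₙ = x̄ + tₙ wₙ ∈ D`,
`yₙ = f(x̄) + tₙ vₙ ∈ E` and, by differentiability, `f(xₙ) - yₙ = o(tₙ)`. Subregularity then
moves `xₙ` by `o(tₙ)` to a point `aₙ ∈ D ∩ f⁻¹(E)`, and the directions
`(aₙ - x̄) / tₙ` still converge to `u`.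
-/

section TangentCone

variable {X Y : Type*} [NormedAddCommGroup X] [NormedSpace ℝ X]
  [NormedAddCommGroup Y] [NormedSpace ℝ Y]

theorem PosToZero.comp_add {t : ℕ → ℝ} (ht : PosToZero t) (N : ℕ) :
    PosToZero fun n => t (n + N) :=
  ⟨fun _ => ht.1 _, ht.2.comp (tendsto_add_atTop_nat N)⟩

theorem PosToZero.tendsto_smul {t : ℕ → ℝ} (ht : PosToZero t) {w : ℕ → X} {u : X}
    (hw : Tendsto w atTop (𝓝 u)) : Tendsto (fun n => t n • w n) atTop (𝓝 0) := by
  simpa using ht.2.smul hw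

theorem PosToZero.tendsto_add_smul {t : ℕ → ℝ} (ht : PosToZero t) {w : ℕ → X} {u : X}
    (hw : Tendsto w atTop (𝓝 u)) (x : X) : Tendsto (fun n => x + t n • w n) atTop (𝓝 x) := by
  simpa using tendsto_const_nhds.add (ht.tendsto_smul hw)

theorem mem_TB_of_eventually {S : Set X} {x u : X} {t : ℕ → ℝ} (ht : PosToZero t)
    {w : ℕ → X} (hw : Tendsto w atTop (𝓝 u)) (hS : ∀ᶠ n in atTop, x + t n • w n ∈ S) :
    u ∈ TB S x := by
  obtain ⟨N, hN⟩ := eventually_atTop.mp hS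
  exact ⟨_, ht.comp_add N, _, hw.comp (tendsto_add_atTop_nat N),
    fun n => hN _ (Nat.le_add_left N n)⟩

theorem mem_TB_of_tendsto_inv_smul_sub {S : Set X} {x u : X} {t : ℕ → ℝ} (ht : PosToZero t)
    {w a : ℕ → X} (hw : Tendsto w atTop (𝓝 u)) (haS : ∀ᶠ n in atTop, a n ∈ S)
    (ha : Tendsto (fun n => (t n)⁻¹ • (a n - (x + t n • w n))) atTop (𝓝 0)) :
    u ∈ TB S x := by
  have hdir : ∀ n, (t n)⁻¹ • (a n - x) = (t n)⁻¹ • (a n - (x + t n • w n)) + w n := by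
    intro n
    simp only [smul_sub, smul_add, inv_smul_smul₀ (ht.1 n).ne']
    abel
  refine mem_TB_of_eventually ht (w := fun n => (t n)⁻¹ • (a n - x)) ?_ ?_
  · simpa [hdir] using ha.add hw
  · filter_upwards [haS] with n hn
    rwa [smul_inv_smul₀ (ht.1 n).ne', add_sub_cancel]

theorem HasFDerivAt.tendsto_inv_smul_sub_add_smul {f : X → Y} {x : X} {A : X →L[ℝ] Y}
    (hf : HasFDerivAt f A x) {t : ℕ → ℝ} (ht : PosToZero t) {w : ℕ → X} {v : ℕ → Y} {u : X}
    (hw : Tendsto w atTop (𝓝 u)) (hv : Tendsto v atTop (𝓝 (A u))) :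
    Tendsto (fun n => (t n)⁻¹ • (f (x + t n • w n) - (f x + t n • v n))) atTop (𝓝 0) := by
  have hquot : Tendsto (fun n => (t n)⁻¹ • (f (x + t n • w n) - f x)) atTop (𝓝 (A u)) := by
    refine (hf.hasFDerivWithinAt (s := Set.univ)).lim (ht.tendsto_smul hw)
      (Eventually.of_forall fun _ => Set.mem_univ _) ?_
    simpa [smul_smul, inv_mul_cancel₀ (ht.1 _).ne'] using hw
  have hsplit : ∀ n, (t n)⁻¹ • (f (x + t n • w n) - (f x + t n • v n))
      = (t n)⁻¹ • (f (x + t n • w n) - f x) - v n := by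
    intro n
    rw [← sub_sub, smul_sub, inv_smul_smul₀ (ht.1 n).ne']
  simpa [hsplit] using hquot.sub hv

theorem exists_feasible_of_subregular
    {D : Set X} {E : Set Y} {f : X → Y} {xb : X} {s μ : ℝ} (hs : 0 < s)
    (hsub : ∀ x ∈ D, ∀ y ∈ E, ‖x - xb‖ < s → ‖y - f xb‖ < s → ∀ ε > (0:ℝ),
      ∃ a ∈ D, ∃ b ∈ E, f a = b ∧ ‖x - a‖ + ‖y - b‖ < μ * ‖f x - y‖ + ε)
    {x : ℕ → X} {y : ℕ → Y} (hxD : ∀ n, x n ∈ D) (hyE : ∀ n, y n ∈ E)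
    (hx : Tendsto x atTop (𝓝 xb)) (hy : Tendsto y atTop (𝓝 (f xb)))
    {t : ℕ → ℝ} (ht : PosToZero t)
    (hxy : Tendsto (fun n => (t n)⁻¹ • (f (x n) - y n)) atTop (𝓝 0)) :
    ∃ a : ℕ → X, (∀ᶠ n in atTop, a n ∈ D ∩ f ⁻¹' E) ∧
      Tendsto (fun n => (t n)⁻¹ • (a n - x n)) atTop (𝓝 0) := by
  have hnear : ∀ᶠ n in atTop, ∃ a, a ∈ D ∩ f ⁻¹' E ∧
      ‖(t n)⁻¹ • (a - x n)‖ ≤ μ * ‖(t n)⁻¹ • (f (x n) - y n)‖ + t n := by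
    filter_upwards [Metric.tendsto_nhds.mp hx s hs, Metric.tendsto_nhds.mp hy s hs]
      with n hxn hyn
    rw [dist_eq_norm] at hxn hyn
    have htn := ht.1 n
    -- the slack `ε = tₙ²` becomes `tₙ` after scaling by `tₙ⁻¹`
    obtain ⟨a, haD, b, hbE, rfl, hab⟩ := hsub _ (hxD n) _ (hyE n) hxn hyn _ (pow_pos htn 2)
    refine ⟨a, ⟨haD, hbE⟩, ?_⟩
    have hxa : ‖a - x n‖ ≤ μ * ‖f (x n) - y n‖ + t n ^ 2 := by
      rw [norm_sub_rev]; linarith [norm_nonneg (y n - f a)]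
    rw [norm_smul, norm_smul, Real.norm_of_nonneg (inv_pos.mpr htn).le, inv_mul_le_iff₀ htn]
    have hscale : t n * (μ * ((t n)⁻¹ * ‖f (x n) - y n‖) + t n)
        = μ * ‖f (x n) - y n‖ + t n ^ 2 := by
      field_simp
    linarith
  obtain ⟨a, ha⟩ := hnear.choice
  refine ⟨a, ha.mono fun _ h => h.1, squeeze_zero_norm' (ha.mono fun _ h => h.2) ?_⟩
  simpa using (hxy.norm.const_mul μ).add ht.2

end TangentCone

theorem tb_inter_subregular_general {X Y : Type*}
    [NormedAddCommGroup X] [NormedSpace ℝ X]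
    [NormedAddCommGroup Y] [NormedSpace ℝ Y]
    (D : Set X) (E : Set Y)
    (f : X → Y) (hf : ContDiff ℝ 1 f) (xb : X)
    (hsub : ∃ s > (0:ℝ), ∃ μ > (0:ℝ), ∀ x ∈ D, ∀ y ∈ E,
      ‖x - xb‖ < s → ‖y - f xb‖ < s → ∀ ε > (0:ℝ),
        ∃ a ∈ D, ∃ b ∈ E, f a = b ∧ ‖x - a‖ + ‖y - b‖ < μ * ‖f x - y‖ + ε) :
    TB D xb ∩ (fderiv ℝ f xb) ⁻¹' (TU E (f xb)) ⊆ TB (D ∩ f ⁻¹' E) xb := by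
  obtain ⟨s, hs, μ, -, hsub⟩ := hsub
  rintro u ⟨⟨t, ht, w, hw, hwD⟩, huE⟩
  obtain ⟨v, hv, hvE⟩ := huE t ht
  have hderiv : HasFDerivAt f (fderiv ℝ f xb) xb :=
    (hf.differentiable one_ne_zero xb).hasFDerivAt
  obtain ⟨a, haS, ha⟩ := exists_feasible_of_subregular hs hsub hwD hvE
    (ht.tendsto_add_smul hw xb) (ht.tendsto_add_smul hv (f xb)) ht
    (hderiv.tendsto_inv_smul_sub_add_smul ht hw hv)
  exact mem_TB_of_tendsto_inv_smul_sub ht hw haS ha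

theorem tb_inter_subregular {X Y : Type*}
    [NormedAddCommGroup X] [NormedSpace ℝ X] [CompleteSpace X]
    [NormedAddCommGroup Y] [NormedSpace ℝ Y] [CompleteSpace Y]
    (D : Set X) (E : Set Y) (hD : IsClosed D) (hE : IsClosed E)
    (f : X → Y) (hf : ContDiff ℝ 1 f) (xb : X) (hxb : xb ∈ D ∩ f ⁻¹' E)
    (hsub : ∃ s > (0:ℝ), ∃ μ > (0:ℝ), ∀ x ∈ D, ∀ y ∈ E,
      ‖x - xb‖ < s → ‖y - f xb‖ < s → ∀ ε > (0:ℝ),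
        ∃ a ∈ D, ∃ b ∈ E, f a = b ∧ ‖x - a‖ + ‖y - b‖ < μ * ‖f x - y‖ + ε) :
    TB D xb ∩ (fderiv ℝ f xb) ⁻¹' (TU E (f xb)) ⊆ TB (D ∩ f ⁻¹' E) xb :=
  tb_inter_subregular_general D E f hf xb hsub
end

section
/- Under the same metric subregularity assumption on g(x,y) = f(x) − y at (x̄, f(x̄), 0) with respect to D × E, one has the equality T_U(D, x̄) ∩ ∇f(x̄)⁻¹(T_U(E, f(x̄))) = T_U(D ∩ f⁻¹(E), x̄). -/
open Filter Topology Pointwise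

/-! Only `⊆` needs subregularity. Given `u` in the left-hand side and `t n ↓ 0`, pick `x n ∈ D`
and `y n ∈ E` with `(x n - x̄) / t n → u` and `(y n - f x̄) / t n → ∇f(x̄) u`. The residual
`f (x n) - y n` is then `o(t n)`, so subregularity gives `a n ∈ D ∩ f⁻¹(E)` with
`‖x n - a n‖ = o(t n)`, whence `(a n - x̄) / t n → u`. -/

open Filter Topology

section TangentCone

variable {X Y : Type*} [NormedAddCommGroup X] [NormedAddCommGroup Y]

/-- The subregularity hypothesis, with the distance to `{(a, b) ∈ D × E | f a = b}` expressed
through `ε`-approximate minimisers. -/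
def MetricSubregularAt (D : Set X) (E : Set Y) (f : X → Y) (xb : X) : Prop :=
  ∃ s > (0:ℝ), ∃ μ > (0:ℝ), ∀ x ∈ D, ∀ y ∈ E,
    ‖x - xb‖ < s → ‖y - f xb‖ < s → ∀ ε > (0:ℝ),
      ∃ a ∈ D, ∃ b ∈ E, f a = b ∧ ‖x - a‖ + ‖y - b‖ < μ * ‖f x - y‖ + ε

theorem MetricSubregularAt.exists_feasible_seq_near {D : Set X} {E : Set Y} {f : X → Y} {xb : X}
    (hsub : MetricSubregularAt D E f xb) (hxb : xb ∈ D ∩ f ⁻¹' E) :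
    ∃ μ : ℝ, ∀ (x : ℕ → X) (y : ℕ → Y), (∀ n, x n ∈ D) → (∀ n, y n ∈ E) →
      Tendsto x atTop (𝓝 xb) → Tendsto y atTop (𝓝 (f xb)) →
      ∀ ε : ℕ → ℝ, (∀ n, 0 < ε n) → ∃ a : ℕ → X, (∀ n, a n ∈ D ∩ f ⁻¹' E) ∧
        ∀ᶠ n in atTop, ‖x n - a n‖ ≤ μ * ‖f (x n) - y n‖ + ε n := by
  obtain ⟨s, hs, μ, -, hsub⟩ := hsub
  refine ⟨μ, fun x y hxD hyE hx hy ε hε => ?_⟩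
  have hnear : ∀ᶠ n in atTop, ‖x n - xb‖ < s ∧ ‖y n - f xb‖ < s :=
    ((tendsto_iff_norm_sub_tendsto_zero.1 hx).eventually_lt_const hs).and
      ((tendsto_iff_norm_sub_tendsto_zero.1 hy).eventually_lt_const hs)
  obtain ⟨n₀, hn₀⟩ := eventually_atTop.1 hnear
  have hproj : ∀ n, ∃ a ∈ D ∩ f ⁻¹' E, n₀ ≤ n → ‖x n - a‖ ≤ μ * ‖f (x n) - y n‖ + ε n := by
    intro n
    by_cases hn : n₀ ≤ n
    · obtain ⟨a, haD, b, hbE, rfl, hlt⟩ :=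
        hsub (x n) (hxD n) (y n) (hyE n) (hn₀ n hn).1 (hn₀ n hn).2 (ε n) (hε n)
      exact ⟨a, ⟨haD, hbE⟩, fun _ => (le_add_of_nonneg_right (norm_nonneg _)).trans hlt.le⟩
    · exact ⟨xb, hxb, fun h => absurd h hn⟩
  choose a ha hax using hproj
  exact ⟨a, ha, eventually_atTop.2 ⟨n₀, hax⟩⟩

variable [NormedSpace ℝ X] [NormedSpace ℝ Y]

theorem mem_TU_iff {D : Set X} {x u : X} :
    u ∈ TU D x ↔ ∀ t, PosToZero t → ∃ a : ℕ → X, (∀ n, a n ∈ D) ∧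
      Tendsto (fun n => (t n)⁻¹ • (a n - x)) atTop (𝓝 u) := by
  refine forall₂_congr fun t ht => ⟨fun ⟨w, hw, hwD⟩ => ⟨_, hwD, ?_⟩, fun ⟨a, haD, ha⟩ => ⟨_, ha, ?_⟩⟩
  · simpa [inv_smul_smul₀ (ht.1 _).ne'] using hw
  · simpa [smul_inv_smul₀ (ht.1 _).ne'] using haD

theorem TU_mono {D D' : Set X} (h : D ⊆ D') (x : X) : TU D x ⊆ TU D' x :=
  fun _ hu t ht => (hu t ht).imp fun _ ⟨hw, hwD⟩ => ⟨hw, fun n => h (hwD n)⟩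

theorem PosToZero.tendsto_of_tendsto_inv_smul_sub {t : ℕ → ℝ} (ht : PosToZero t)
    {a : ℕ → X} {x u : X} (h : Tendsto (fun n => (t n)⁻¹ • (a n - x)) atTop (𝓝 u)) :
    Tendsto (fun n => a n - x) atTop (𝓝 0) := by
  simpa [smul_inv_smul₀ (ht.1 _).ne'] using ht.2.smul h

theorem HasFDerivAt.tendsto_inv_smul_sub {f : X → Y} {A : X →L[ℝ] Y} {x : X}
    (hf : HasFDerivAt f A x) {t : ℕ → ℝ} (ht : PosToZero t) {a : ℕ → X} {u : X}
    (h : Tendsto (fun n => (t n)⁻¹ • (a n - x)) atTop (𝓝 u)) :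
    Tendsto (fun n => (t n)⁻¹ • (f (a n) - f x)) atTop (𝓝 (A u)) := by
  simpa using hf.hasFDerivWithinAt.lim (s := Set.univ)
    (ht.tendsto_of_tendsto_inv_smul_sub h) (.of_forall fun _ => trivial) h

theorem TU_inter_preimage_subset {D : Set X} {E : Set Y} {f : X → Y} {A : X →L[ℝ] Y}
    {xb : X} (hf : HasFDerivAt f A xb) :
    TU (D ∩ f ⁻¹' E) xb ⊆ TU D xb ∩ A ⁻¹' TU E (f xb) := by
  refine fun u hu => ⟨TU_mono Set.inter_subset_left xb hu, mem_TU_iff.2 fun t ht => ?_⟩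
  obtain ⟨a, ha, hau⟩ := mem_TU_iff.1 hu t ht
  exact ⟨fun n => f (a n), fun n => (ha n).2, hf.tendsto_inv_smul_sub ht hau⟩

theorem MetricSubregularAt.inter_TU_subset {D : Set X} {E : Set Y} {f : X → Y}
    {A : X →L[ℝ] Y} {xb : X} (hsub : MetricSubregularAt D E f xb) (hxb : xb ∈ D ∩ f ⁻¹' E)
    (hf : HasFDerivAt f A xb) :
    TU D xb ∩ A ⁻¹' TU E (f xb) ⊆ TU (D ∩ f ⁻¹' E) xb := by
  obtain ⟨μ, hproj⟩ := hsub.exists_feasible_seq_near hxb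
  rintro u ⟨huD, huE⟩
  refine mem_TU_iff.2 fun t ht => ?_
  obtain ⟨x, hxD, hxu⟩ := mem_TU_iff.1 huD t ht
  obtain ⟨y, hyE, hyu⟩ := mem_TU_iff.1 huE t ht
  obtain ⟨a, ha, hax⟩ := hproj x y hxD hyE
    (tendsto_sub_nhds_zero_iff.1 (ht.tendsto_of_tendsto_inv_smul_sub hxu))
    (tendsto_sub_nhds_zero_iff.1 (ht.tendsto_of_tendsto_inv_smul_sub hyu))
    (fun n => t n ^ 2) (fun n => pow_pos (ht.1 n) 2)
  have hres : Tendsto (fun n => (t n)⁻¹ * ‖f (x n) - y n‖) atTop (𝓝 0) := by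
    simpa only [sub_self, norm_zero, ← smul_sub, sub_sub_sub_cancel_right, norm_smul, norm_inv,
      Real.norm_of_nonneg (ht.1 _).le] using ((hf.tendsto_inv_smul_sub ht hxu).sub hyu).norm
  have hgap : Tendsto (fun n => (t n)⁻¹ • (x n - a n)) atTop (𝓝 0) := by
    refine squeeze_zero_norm' ?_ (by simpa using (hres.const_mul μ).add ht.2)
    filter_upwards [hax] with n hn
    have htn := ht.1 n
    calc ‖(t n)⁻¹ • (x n - a n)‖ = (t n)⁻¹ * ‖x n - a n‖ := by
          rw [norm_smul, norm_inv, Real.norm_of_nonneg htn.le]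
      _ ≤ (t n)⁻¹ * (μ * ‖f (x n) - y n‖ + t n ^ 2) := by gcongr
      _ = μ * ((t n)⁻¹ * ‖f (x n) - y n‖) + t n := by field_simp
  exact ⟨a, ha, by simpa [← smul_sub] using hxu.sub hgap⟩

end TangentCone

theorem tu_inter_subregular_general {X Y : Type*}
    [NormedAddCommGroup X] [NormedSpace ℝ X]
    [NormedAddCommGroup Y] [NormedSpace ℝ Y]
    (D : Set X) (E : Set Y)
    (f : X → Y) (hf : ContDiff ℝ 1 f) (xb : X) (hxb : xb ∈ D ∩ f ⁻¹' E)
    (hsub : ∃ s > (0:ℝ), ∃ μ > (0:ℝ), ∀ x ∈ D, ∀ y ∈ E,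
      ‖x - xb‖ < s → ‖y - f xb‖ < s → ∀ ε > (0:ℝ),
        ∃ a ∈ D, ∃ b ∈ E, f a = b ∧ ‖x - a‖ + ‖y - b‖ < μ * ‖f x - y‖ + ε) :
    TU D xb ∩ (fderiv ℝ f xb) ⁻¹' (TU E (f xb)) = TU (D ∩ f ⁻¹' E) xb := by
  have hdf : HasFDerivAt f (fderiv ℝ f xb) xb := (hf.differentiable one_ne_zero xb).hasFDerivAt
  exact (MetricSubregularAt.inter_TU_subset hsub hxb hdf).antisymm (TU_inter_preimage_subset hdf)

theorem tu_inter_subregular {X Y : Type*}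
    [NormedAddCommGroup X] [NormedSpace ℝ X] [CompleteSpace X]
    [NormedAddCommGroup Y] [NormedSpace ℝ Y] [CompleteSpace Y]
    (D : Set X) (E : Set Y) (hD : IsClosed D) (hE : IsClosed E)
    (f : X → Y) (hf : ContDiff ℝ 1 f) (xb : X) (hxb : xb ∈ D ∩ f ⁻¹' E)
    (hsub : ∃ s > (0:ℝ), ∃ μ > (0:ℝ), ∀ x ∈ D, ∀ y ∈ E,
      ‖x - xb‖ < s → ‖y - f xb‖ < s → ∀ ε > (0:ℝ),
        ∃ a ∈ D, ∃ b ∈ E, f a = b ∧ ‖x - a‖ + ‖y - b‖ < μ * ‖f x - y‖ + ε) :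
    TU D xb ∩ (fderiv ℝ f xb) ⁻¹' (TU E (f xb)) = TU (D ∩ f ⁻¹' E) xb :=
  tu_inter_subregular_general D E f hf xb hxb hsub
end

section
/- Under the same metric subregularity assumption on g(x,y) = f(x) − y at (x̄, f(x̄), 0) with respect to D × E, and with f twice continuously Fréchet differentiable, for every x₁ ∈ X: T_B²(D, x̄, x₁) ∩ ∇f(x̄)⁻¹(T_U²(E, f(x̄), ∇f(x̄)(x₁)) − (1/2)∇²f(x̄)(x₁,x₁)) ⊂ T_B²(D ∩ f⁻¹(E), x̄, x₁). -/
open Filter Topology Pointwise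

/-! Along a sequence `t n ↓ 0` witnessing `u ∈ T_B²(D, x̄, x₁)` through points `x n ∈ D`, the
Ursescu property of `v` yields points `y n ∈ E` with the same second-order expansion as `f (x n)`,
so by the second-order Taylor formula `‖f (x n) - y n‖ = o(t n ^ 2)`. Metric subregularity bounds
the distance from `x n` to `D ∩ f⁻¹(E)` by `μ ‖f (x n) - y n‖ = o(t n ^ 2)`, and perturbing the
points of a second-order curve by `o(t n ^ 2)` does not change its second-order direction `u`. -/

open Metric Asymptotics

theorem infDist_inter_preimage_le {X Y : Type*} [SeminormedAddCommGroup X]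
    [SeminormedAddCommGroup Y] {D : Set X} {E : Set Y} {f : X → Y} {μ : ℝ} {x : X} {y : Y}
    (h : ∀ ε > 0, ∃ a ∈ D, ∃ b ∈ E, f a = b ∧ ‖x - a‖ + ‖y - b‖ < μ * ‖f x - y‖ + ε) :
    infDist x (D ∩ f ⁻¹' E) ≤ μ * ‖f x - y‖ := by
  refine le_of_forall_pos_lt_add fun ε hε => ?_
  obtain ⟨a, haD, b, hbE, rfl, hlt⟩ := h ε hε
  calc infDist x (D ∩ f ⁻¹' E) ≤ ‖x - a‖ := dist_eq_norm x a ▸ infDist_le_dist_of_mem ⟨haD, hbE⟩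
    _ < μ * ‖f x - y‖ + ε := by linarith [norm_nonneg (y - f a)]

section SecondOrderTangents

variable {X Y : Type*} [NormedAddCommGroup X] [NormedSpace ℝ X]
  [NormedAddCommGroup Y] [NormedSpace ℝ Y]

theorem isLittleO_sub_taylor_two {f : X → Y} (hf : ContDiff ℝ 2 f) (x : X) :
    (fun h => f (x + h) - f x - fderiv ℝ f x h - (2⁻¹ : ℝ) • fderiv ℝ (fderiv ℝ f) x h h)
      =o[𝓝 0] fun h => ‖h‖ ^ 2 := by
  set A := fderiv ℝ f
  set B := fderiv ℝ A x
  have hdf : ∀ y, HasFDerivAt f (A y) y := fun y =>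
    (hf.differentiable (by norm_num) y).hasFDerivAt
  have hdA : HasFDerivAt A B x :=
    ((hf.fderiv_right (m := 1) (by norm_num)).differentiable (by norm_num) x).hasFDerivAt
  have hsymm : ∀ v w, B v w = B w v := second_derivative_symmetric hdf hdA
  have hderiv : ∀ h, HasFDerivAt (fun h => f (x + h) - f x - A x h - (2⁻¹ : ℝ) • B h h)
      (A (x + h) - A x - B h) h := by
    intro h
    have hfx : HasFDerivAt (fun h => f (x + h)) (A (x + h)) h := by
      simpa [Function.comp_def] using (hdf (x + h)).comp h ((hasFDerivAt_id h).const_add x)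
    have hB : HasFDerivAt (fun h => B h h) (B h + B.flip h) h := by
      simpa using (B.hasFDerivAt (x := h)).clm_apply (hasFDerivAt_id h)
    convert ((hfx.sub_const (f x)).sub (A x).hasFDerivAt).sub (hB.const_smul (2⁻¹ : ℝ)) using 1
    · rfl
    ext k
    simp only [sub_apply, smul_apply, add_apply, ContinuousLinearMap.flip_apply, hsymm k h]
    module
  have hA' : (fun h => A (x + h) - A x - B h) =o[𝓝[Set.univ] 0] fun h => ‖h - 0‖ ^ 1 := by
    simpa using (hasFDerivAt_iff_isLittleO_nhds_zero.1 hdA).norm_right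
  simpa using convex_univ.isLittleO_pow_succ (Set.mem_univ 0)
    (fun h _ => (hderiv h).hasFDerivWithinAt) hA'

theorem tendsto_add_smul_add_sq_smul {l : Filter ℕ} {t : ℕ → ℝ} (ht : Tendsto t l (𝓝 0))
    {w : ℕ → X} {u : X} (hw : Tendsto w l (𝓝 u)) (x x₁ : X) :
    Tendsto (fun n => x + t n • x₁ + t n ^ 2 • w n) l (𝓝 x) := by
  simpa using ((ht.smul_const x₁).const_add x).add ((ht.pow 2).smul hw)

theorem tendsto_second_order_difference_quotient {f : X → Y} (hf : ContDiff ℝ 2 f)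
    (x x₁ : X) {u : X} {t : ℕ → ℝ} (ht : PosToZero t) {w : ℕ → X} (hw : Tendsto w atTop (𝓝 u)) :
    Tendsto (fun n => (t n ^ 2)⁻¹ •
        (f (x + t n • x₁ + t n ^ 2 • w n) - f x - t n • fderiv ℝ f x x₁)) atTop
      (𝓝 (fderiv ℝ f x u + (2⁻¹ : ℝ) • fderiv ℝ (fderiv ℝ f) x x₁ x₁)) := by
  set A := fderiv ℝ f x
  set B := fderiv ℝ (fderiv ℝ f) x
  set R := fun h => f (x + h) - f x - A h - (2⁻¹ : ℝ) • B h h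
  set z := fun n => x₁ + t n • w n
  have hz : Tendsto z atTop (𝓝 x₁) := by
    simpa using (ht.2.smul hw).const_add x₁
  have hcurve : ∀ n, x + t n • x₁ + t n ^ 2 • w n = x + t n • z n := by
    intro n
    simp only [z, smul_add, smul_smul, ← pow_two, add_assoc]
  have hsplit : ∀ n, (t n ^ 2)⁻¹ • (f (x + t n • x₁ + t n ^ 2 • w n) - f x - t n • A x₁)
      = (t n ^ 2)⁻¹ • R (t n • z n) + (A (w n) + (2⁻¹ : ℝ) • B (z n) (z n)) := by
    intro n
    have ht2 : t n ^ 2 ≠ 0 := pow_ne_zero 2 (ht.1 n).ne'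
    rw [hcurve, inv_smul_eq_iff₀ ht2, smul_add (t n ^ 2), smul_inv_smul₀ ht2]
    simp only [R, z, map_smul, map_add, smul_apply]
    module
  have hR : Tendsto (fun n => (t n ^ 2)⁻¹ • R (t n • z n)) atTop (𝓝 0) := by
    have hsmall : Tendsto (fun n => t n • z n) atTop (𝓝 0) := by
      simpa using ht.2.smul hz
    have hbound : (fun n => ‖t n • z n‖ ^ 2) =O[atTop] fun n => t n ^ 2 := by
      have : (fun n => ‖z n‖ ^ 2) =O[atTop] fun _ => (1 : ℝ) :=
        (hz.norm.pow 2).isBigO_one ℝ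
      simpa [norm_smul, mul_pow] using (isBigO_refl (fun n => t n ^ 2) atTop).mul this
    exact (((isLittleO_sub_taylor_two hf x).comp_tendsto hsmall).trans_isBigO
      hbound).tendsto_inv_smul_nhds_zero
  have hB : Continuous fun y => B y y := B.continuous.clm_apply continuous_id
  simpa [hsplit] using hR.add ((A.continuous.tendsto u).comp hw |>.add
    (((hB.tendsto x₁).comp hz).const_smul (2⁻¹ : ℝ)))

theorem mem_TB2_of_tendsto_infDist {S : Set X} (hS : S.Nonempty) {x x₁ u : X} {t : ℕ → ℝ}
    (ht : PosToZero t) {w : ℕ → X} (hw : Tendsto w atTop (𝓝 u))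
    (hdist : Tendsto (fun n => infDist (x + t n • x₁ + t n ^ 2 • w n) S / t n ^ 2) atTop
      (𝓝 0)) :
    u ∈ TB2 S x x₁ := by
  set c := fun n => x + t n • x₁ + t n ^ 2 • w n
  have hnear : ∀ n, ∃ a ∈ S, dist (c n) a < infDist (c n) S + t n ^ 3 := fun n =>
    (infDist_lt_iff hS).1 (lt_add_of_pos_right _ (pow_pos (ht.1 n) 3))
  choose a haS hadist using hnear
  have hcorr : Tendsto (fun n => (t n ^ 2)⁻¹ • (a n - c n)) atTop (𝓝 0) := by
    refine squeeze_zero_norm (fun n => ?_) (by simpa using hdist.add ht.2)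
    have ht0 : t n ≠ 0 := (ht.1 n).ne'
    calc ‖(t n ^ 2)⁻¹ • (a n - c n)‖ = dist (c n) (a n) / t n ^ 2 := by
          rw [norm_smul, norm_inv, norm_pow, Real.norm_eq_abs, sq_abs, dist_eq_norm',
            inv_mul_eq_div]
      _ ≤ (infDist (c n) S + t n ^ 3) / t n ^ 2 := by gcongr; exact (hadist n).le
      _ = infDist (c n) S / t n ^ 2 + t n := by field_simp
  refine ⟨t, ht, fun n => w n + (t n ^ 2)⁻¹ • (a n - c n), by simpa using hw.add hcorr,
    fun n => ?_⟩
  rw [smul_add, smul_inv_smul₀ (pow_ne_zero 2 (ht.1 n).ne')]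
  convert haS n using 1
  simp only [c]
  abel

end SecondOrderTangents

theorem tb2_inter_subregular_general {X Y : Type*}
    [NormedAddCommGroup X] [NormedSpace ℝ X]
    [NormedAddCommGroup Y] [NormedSpace ℝ Y]
    (D : Set X) (E : Set Y)
    (f : X → Y) (hf : ContDiff ℝ 2 f) (xb : X) (hxb : xb ∈ D ∩ f ⁻¹' E)
    (hsub : ∃ s > (0:ℝ), ∃ μ > (0:ℝ), ∀ x ∈ D, ∀ y ∈ E,
      ‖x - xb‖ < s → ‖y - f xb‖ < s → ∀ ε > (0:ℝ),
        ∃ a ∈ D, ∃ b ∈ E, f a = b ∧ ‖x - a‖ + ‖y - b‖ < μ * ‖f x - y‖ + ε)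
    (x₁ : X) :
    TB2 D xb x₁ ∩ (fderiv ℝ f xb) ⁻¹'
      ((fun z => z - (2⁻¹ : ℝ) • (fderiv ℝ (fderiv ℝ f) xb x₁ x₁)) ''
        TU2 E (f xb) (fderiv ℝ f xb x₁))
      ⊆ TB2 (D ∩ f ⁻¹' E) xb x₁ := by
  obtain ⟨s, hs, μ, -, hreg⟩ := hsub
  rintro u ⟨⟨t, ht, w, hw, hwD⟩, v, hvE, hv⟩
  obtain ⟨vs, hvs, n₁, hvsE⟩ := hvE t ht
  set xn := fun n => xb + t n • x₁ + t n ^ 2 • w n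
  set yn := fun n => f xb + t n • fderiv ℝ f xb x₁ + t n ^ 2 • vs n
  have hgap : Tendsto (fun n => ‖f (xn n) - yn n‖ / t n ^ 2) atTop (𝓝 0) := by
    have hlim := (tendsto_second_order_difference_quotient hf xb x₁ ht hw).sub hvs
    simp only [← hv, sub_add_cancel, sub_self] at hlim
    rw [← norm_zero (E := Y)]
    refine hlim.norm.congr fun n => ?_
    rw [← inv_smul_smul₀ (pow_ne_zero 2 (ht.1 n).ne') (vs n), ← smul_sub, norm_smul, norm_inv,
      norm_pow, Real.norm_eq_abs, sq_abs, inv_mul_eq_div]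
    congr 2
    simp only [xn, yn]
    abel
  have hsubreg : ∀ᶠ n in atTop, infDist (xn n) (D ∩ f ⁻¹' E) ≤ μ * ‖f (xn n) - yn n‖ := by
    filter_upwards [(tendsto_add_smul_add_sq_smul ht.2 hw xb x₁).eventually (ball_mem_nhds xb hs),
      (tendsto_add_smul_add_sq_smul ht.2 hvs (f xb) (fderiv ℝ f xb x₁)).eventually
        (ball_mem_nhds (f xb) hs), eventually_ge_atTop n₁] with n hxn hyn hn
    rw [dist_eq_norm] at hxn hyn
    exact infDist_inter_preimage_le (hreg _ (hwD n) _ (hvsE n hn) hxn hyn)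
  refine mem_TB2_of_tendsto_infDist ⟨xb, hxb⟩ ht hw (squeeze_zero'
    (.of_forall fun n => div_nonneg infDist_nonneg (sq_nonneg _)) ?_
    (by simpa using hgap.const_mul μ))
  filter_upwards [hsubreg] with n hn
  rw [mul_div_assoc']
  gcongr

theorem tb2_inter_subregular {X Y : Type*}
    [NormedAddCommGroup X] [NormedSpace ℝ X] [CompleteSpace X]
    [NormedAddCommGroup Y] [NormedSpace ℝ Y] [CompleteSpace Y]
    (D : Set X) (E : Set Y) (hD : IsClosed D) (hE : IsClosed E)
    (f : X → Y) (hf : ContDiff ℝ 2 f) (xb : X) (hxb : xb ∈ D ∩ f ⁻¹' E)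
    (hsub : ∃ s > (0:ℝ), ∃ μ > (0:ℝ), ∀ x ∈ D, ∀ y ∈ E,
      ‖x - xb‖ < s → ‖y - f xb‖ < s → ∀ ε > (0:ℝ),
        ∃ a ∈ D, ∃ b ∈ E, f a = b ∧ ‖x - a‖ + ‖y - b‖ < μ * ‖f x - y‖ + ε)
    (x₁ : X) :
    TB2 D xb x₁ ∩ (fderiv ℝ f xb) ⁻¹'
      ((fun z => z - (2⁻¹ : ℝ) • (fderiv ℝ (fderiv ℝ f) xb x₁ x₁)) ''
        TU2 E (f xb) (fderiv ℝ f xb x₁))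
      ⊆ TB2 (D ∩ f ⁻¹' E) xb x₁ :=
  tb2_inter_subregular_general D E f hf xb hxb hsub x₁
end

section
/- Let F₁, F₂ : X ⇉ Y be set-valued maps, (x̄, ȳ₁) ∈ Gr F₁, (x̄, ȳ₂) ∈ Gr F₂. If F₁ is semi-differentiable at x̄ relative to ȳ₁ (i.e., D_D F₁(x̄,ȳ₁) = D_B F₁(x̄,ȳ₁)), then for every u ∈ X: D_B F₁(x̄,ȳ₁)(u) + D_B F₂(x̄,ȳ₂)(u) ⊂ D_B(F₁+F₂)(x̄, ȳ₁+ȳ₂)(u). -/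
open Filter Topology Pointwise

theorem db_sum {X Y : Type*}
    [NormedAddCommGroup X] [NormedSpace ℝ X]
    [NormedAddCommGroup Y] [NormedSpace ℝ Y]
    (F₁ F₂ : X → Set Y) (xb : X) (yb₁ yb₂ : Y)
    (h₁ : yb₁ ∈ F₁ xb) (h₂ : yb₂ ∈ F₂ xb)
    (hsemi : ∀ u : X, DD F₁ xb yb₁ u = DB F₁ xb yb₁ u) :
    ∀ u : X, DB F₁ xb yb₁ u + DB F₂ xb yb₂ u ⊆
      DB (fun x => F₁ x + F₂ x) xb (yb₁ + yb₂) u := by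
  intro u v hv
  obtain ⟨v₁, hv₁, v₂, hv₂, rfl⟩ := hv
  -- unpack the Bouligand derivative of F₂
  obtain ⟨t, ht, w, hw, hmem⟩ := hv₂
  -- use semidifferentiability of F₁
  have hD : v₁ ∈ DD F₁ xb yb₁ u := by rw [hsemi u]; exact hv₁
  obtain ⟨v', hv', n₀, hF1⟩ := hD t ht (fun n => (w n).1)
    ((continuous_fst.tendsto _).comp hw)
  refine ⟨fun n => t (n + n₀), ⟨fun n => ht.1 _,
    ht.2.comp (tendsto_add_atTop_nat n₀)⟩,
    fun n => ((w (n + n₀)).1, v' (n + n₀) + (w (n + n₀)).2), ?_, ?_⟩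
  · have h1 : Tendsto (fun n => (w (n + n₀)).1) atTop (𝓝 u) :=
      ((continuous_fst.tendsto _).comp hw).comp (tendsto_add_atTop_nat n₀)
    have h2 : Tendsto (fun n => v' (n + n₀) + (w (n + n₀)).2) atTop (𝓝 (v₁ + v₂)) :=
      (hv'.comp (tendsto_add_atTop_nat n₀)).add
        (((continuous_snd.tendsto _).comp hw).comp (tendsto_add_atTop_nat n₀))
    exact h1.prodMk_nhds h2
  · intro n
    have hA := hF1 (n + n₀) (Nat.le_add_left _ _)
    have hB := hmem (n + n₀)
    show yb₁ + yb₂ + t (n + n₀) • (v' (n + n₀) + (w (n + n₀)).2)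
        ∈ F₁ _ + F₂ _
    have : yb₁ + yb₂ + t (n + n₀) • (v' (n + n₀) + (w (n + n₀)).2)
        = (yb₁ + t (n + n₀) • v' (n + n₀)) + (yb₂ + t (n + n₀) • (w (n + n₀)).2) := by
      rw [smul_add]; abel
    rw [this]
    exact Set.add_mem_add hA hB
end
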